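/- arXiv:2105.13649 — 5 statements merged into one kernel-verified Lean document; each statement's English description precedes it below -/
import Mathlib

section
/- Let l, u be real numbers with l < 0 < u. Then for every x with l ≤ x ≤ u, the error of the minimal-error linear relaxation satisfies |ReLU(x) − ℓ_m(x)| ≤ (−l·u)/(2(u − l)). -/
theorem relu_minimal_linear_relaxation_error_bound
    (l u : ℝ) (hl : l < 0) (hu : 0 < u) :
    ∀ x : ℝ, l ≤ x → x ≤ u →
      |max x 0 - (u / (u - l) * x + (-l * u) / (2 * (u - l)))| ≤
        (-l * u) / (2 * (u - l)) := by
  intro x hlx hxu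
  have hul : (0:ℝ) < u - l := by linarith
  have hne : u - l ≠ 0 := ne_of_gt hul
  rw [abs_le]
  rcases le_total x 0 with h | h
  · rw [max_eq_right h]
    constructor <;> rw [← sub_nonneg]
    · have e : 0 - (u / (u - l) * x + -l * u / (2 * (u - l))) - -(-l * u / (2 * (u - l)))
          = u * (-x) / (u - l) := by field_simp; ring
      rw [e]
      exact div_nonneg (mul_nonneg hu.le (by linarith)) hul.le
    · have e : -l * u / (2 * (u - l)) - (0 - (u / (u - l) * x + -l * u / (2 * (u - l))))
          = u * (x - l) / (u - l) := by field_simp; ring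
      rw [e]
      exact div_nonneg (mul_nonneg hu.le (by linarith)) hul.le
  · rw [max_eq_left h]
    constructor <;> rw [← sub_nonneg]
    · have e : x - (u / (u - l) * x + -l * u / (2 * (u - l))) - -(-l * u / (2 * (u - l)))
          = -l * x / (u - l) := by field_simp; ring
      rw [e]
      exact div_nonneg (mul_nonneg (by linarith) h) hul.le
    · have e : -l * u / (2 * (u - l)) - (x - (u / (u - l) * x + -l * u / (2 * (u - l))))
          = -l * (u - x) / (u - l) := by field_simp; ring
      rw [e]
      exact div_nonneg (mul_nonneg (by linarith) (by linarith)) hul.le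
end

section
/- Let l, u be real numbers with l ≤ 0 ≤ u, and let a, b be arbitrary real numbers. Then for every x with l ≤ x ≤ u, |ReLU(x) − (a·x + b)| ≤ max(|ReLU(l) − (a·l + b)|, |b|, |ReLU(u) − (a·u + b)|); i.e., the maximum absolute error of any linear approximation of ReLU on [l,u] is attained at one of the points l, 0, u. -/
lemma lin_abs_bound (c d u : ℝ) (x : ℝ) (h0 : 0 ≤ x) (hxu : x ≤ u) :
    |c * x + d| ≤ max |d| |c * u + d| := by
  rcases le_total 0 c with hc | hc
  · have h1 : c * x ≤ c * u := mul_le_mul_of_nonneg_left hxu hc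
    have h2 : 0 ≤ c * x := mul_nonneg hc h0
    rw [abs_le]
    constructor <;>
      nlinarith [le_max_left |d| |c*u+d|, le_max_right |d| |c*u+d|,
        neg_abs_le d, le_abs_self d, neg_abs_le (c*u+d), le_abs_self (c*u+d)]
  · have h1 : c * u ≤ c * x := mul_le_mul_of_nonpos_left hxu hc
    have h2 : c * x ≤ 0 := mul_nonpos_of_nonpos_of_nonneg hc h0
    rw [abs_le]
    constructor <;>
      nlinarith [le_max_left |d| |c*u+d|, le_max_right |d| |c*u+d|,
        neg_abs_le d, le_abs_self d, neg_abs_le (c*u+d), le_abs_self (c*u+d)]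

theorem relu_linear_approx_error_attained_at_endpoints_or_zero
    (l u : ℝ) (hl : l ≤ 0) (hu : 0 ≤ u) (a b : ℝ) :
    ∀ x : ℝ, l ≤ x → x ≤ u →
      |max x 0 - (a * x + b)| ≤
        max (max |max l 0 - (a * l + b)| |b|) |max u 0 - (a * u + b)| := by
  intro x hlx hxu
  rcases le_total x 0 with hx | hx
  · have hmx : max x 0 = 0 := max_eq_right hx
    have hml : max l 0 = 0 := max_eq_right hl
    rw [hmx, hml]
    have key : |a * (-x) + (-b)| ≤ max |(-b)| |a * (-l) + (-b)| :=
      lin_abs_bound a (-b) (-l) (-x) (by linarith) (by linarith)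
    have e1 : |a * (-x) + (-b)| = |0 - (a * x + b)| := by
      rw [show a * (-x) + (-b) = 0 - (a * x + b) by ring]
    have e2 : |a * (-l) + (-b)| = |0 - (a * l + b)| := by
      rw [show a * (-l) + (-b) = 0 - (a * l + b) by ring]
    have e3 : |(-b : ℝ)| = |b| := abs_neg b
    rw [e1, e2, e3] at key
    calc |0 - (a * x + b)| ≤ max |b| |0 - (a * l + b)| := key
      _ ≤ max (max |0 - (a * l + b)| |b|) |max u 0 - (a * u + b)| := by
          apply max_le (le_trans (le_max_right _ _) (le_max_left _ _))
            (le_trans (le_max_left _ _) (le_max_left _ _))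
  · have hmx : max x 0 = x := max_eq_left hx
    have hmu : max u 0 = u := max_eq_left hu
    rw [hmx, hmu]
    have key : |(1 - a) * x + (-b)| ≤ max |(-b)| |(1 - a) * u + (-b)| :=
      lin_abs_bound (1 - a) (-b) u x hx hxu
    have e1 : |(1 - a) * x + (-b)| = |x - (a * x + b)| := by
      rw [show (1 - a) * x + (-b) = x - (a * x + b) by ring]
    have e2 : |(1 - a) * u + (-b)| = |u - (a * u + b)| := by
      rw [show (1 - a) * u + (-b) = u - (a * u + b) by ring]
    have e3 : |(-b : ℝ)| = |b| := abs_neg b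
    rw [e1, e2, e3] at key
    calc |x - (a * x + b)| ≤ max |b| |u - (a * u + b)| := key
      _ ≤ max (max |max l 0 - (a * l + b)| |b|) |u - (a * u + b)| := by
          apply max_le (le_trans (le_max_right _ _) (le_max_left _ _)) (le_max_right _ _)
end

section
/- Let l, u be real numbers with l < 0 < u, and let a, b be arbitrary real numbers. Then max(−(a·l + b), b, (1 − a)·u − b) ≥ (−l·u)/(2(u − l)). -/
theorem relu_linear_approx_signed_error_lower_bound
    (l u : ℝ) (hl : l < 0) (hu : 0 < u) (a b : ℝ) :
    max (max (-(a * l + b)) b) ((1 - a) * u - b) ≥ (-l * u) / (2 * (u - l)) := by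
  set M := max (max (-(a * l + b)) b) ((1 - a) * u - b) with hM
  have h1 : -(a * l + b) ≤ M := le_trans (le_max_left _ _) (le_max_left _ _)
  have h2 : b ≤ M := le_trans (le_max_right _ _) (le_max_left _ _)
  have h3 : (1 - a) * u - b ≤ M := le_max_right _ _
  rw [ge_iff_le, div_le_iff₀ (by linarith)]
  nlinarith [mul_le_mul_of_nonneg_left h1 hu.le,
    mul_le_mul_of_nonneg_left h3 (by linarith : (0:ℝ) ≤ -l),
    mul_le_mul_of_nonneg_left h2 (by linarith : (0:ℝ) ≤ u - l)]
end

section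
/- Let l, u be real numbers with l < 0 < u, and let a, b be arbitrary real numbers. Then there exists x with l ≤ x ≤ u such that |ReLU(x) − (a·x + b)| ≥ (−l·u)/(2(u − l)). Consequently, the linear function ℓ_m minimizes the maximum error among all linear approximations of ReLU on [l,u], and the minimal possible maximum error equals (−l·u)/(2(u − l)). -/
/-! The error `e(x) = ReLU(x) - (a x + b)` of any affine function satisfies the identity
`u e(l) - l e(u) + (l - u) e(0) = -l u`: the weights `u, -l, l - u` kill both `a` and `b`.
The absolute weights sum to `2 (u - l)`, so one of the three errors is at least
`-l u / (2 (u - l))` in absolute value. -/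

def reluAffineError (a b x : ℝ) : ℝ := max x 0 - (a * x + b)

lemma reluAffineError_weighted_sum {l u : ℝ} (hl : l ≤ 0) (hu : 0 ≤ u) (a b : ℝ) :
    u * reluAffineError a b l - l * reluAffineError a b u + (l - u) * reluAffineError a b 0
      = -l * u := by
  simp only [reluAffineError, max_eq_right hl, max_eq_left hu, max_self]
  ring

lemma neg_mul_lt_of_abs_reluAffineError_lt {l u c : ℝ} (hl : l ≤ 0) (hu : 0 ≤ u) (hlu : l < u)
    (a b : ℝ) (hel : |reluAffineError a b l| < c) (he0 : |reluAffineError a b 0| < c)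
    (heu : |reluAffineError a b u| < c) :
    -l * u < 2 * (u - l) * c := by
  calc -l * u
      = u * reluAffineError a b l + -l * reluAffineError a b u
          + (u - l) * -reluAffineError a b 0 := by
        rw [← reluAffineError_weighted_sum hl hu a b]; ring
    _ < u * c + -l * c + (u - l) * c := by
        have hel' := mul_le_mul_of_nonneg_left ((le_abs_self _).trans hel.le) hu
        have heu' := mul_le_mul_of_nonneg_left ((le_abs_self _).trans heu.le) (neg_nonneg.2 hl)
        have he0' := mul_lt_mul_of_pos_left ((neg_le_abs _).trans_lt he0) (sub_pos.2 hlu)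
        linarith
    _ = 2 * (u - l) * c := by ring

theorem relu_linear_approx_max_error_lower_bound
    (l u : ℝ) (hl : l < 0) (hu : 0 < u) (a b : ℝ) :
    ∃ x : ℝ, l ≤ x ∧ x ≤ u ∧
      |max x 0 - (a * x + b)| ≥ (-l * u) / (2 * (u - l)) := by
  by_contra! h
  have hlu : l < u := hl.trans hu
  have key := neg_mul_lt_of_abs_reluAffineError_lt hl.le hu.le hlu a b
    (h l le_rfl hlu.le) (h 0 hl.le hu.le) (h u hlu.le le_rfl)
  rw [mul_div_cancel₀ _ (by linarith)] at key
  exact lt_irrefl _ key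
end

section
/- (Non-compounding of removal errors, local form.) Let l ≤ u be real numbers, let a ∈ [0,1] and c ∈ ℝ, and let ℓ(x) = a·x + c. Suppose that for every y with l ≤ y ≤ u, |ℓ(y) − ReLU(y)| ≤ e_v, where e_v ≥ 0. Let x, x̄ ∈ [l,u] with |x̄ − x| ≤ e_in, where e_in ≥ 0. Then |ℓ(x̄) − ReLU(x)| ≤ e_in + e_v; i.e., the overall error at the output of the replaced neuron is upper bounded by the sum e_in + e_v of the incoming error and the error introduced by the replacement, rather than by their product or any compounded quantity. -/
theorem removal_errors_do_not_compound
    (l u a c e_v e_in : ℝ) (hlu : l ≤ u) (ha0 : 0 ≤ a) (ha1 : a ≤ 1)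
    (hev : 0 ≤ e_v) (hein : 0 ≤ e_in)
    (herr : ∀ y : ℝ, l ≤ y → y ≤ u → |(a * y + c) - max y 0| ≤ e_v)
    (x xbar : ℝ) (hx : l ≤ x ∧ x ≤ u) (hxbar : l ≤ xbar ∧ xbar ≤ u)
    (hclose : |xbar - x| ≤ e_in) :
    |(a * xbar + c) - max x 0| ≤ e_in + e_v := by
  have h1 := herr xbar hxbar.1 hxbar.2
  have h2 : |max xbar 0 - max x 0| ≤ |xbar - x| := abs_max_sub_max_le_abs _ _ _
  calc |(a * xbar + c) - max x 0|
      = |((a * xbar + c) - max xbar 0) + (max xbar 0 - max x 0)| := by ring_nf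
    _ ≤ |(a * xbar + c) - max xbar 0| + |max xbar 0 - max x 0| := abs_add_le _ _
    _ ≤ e_v + e_in := add_le_add h1 (h2.trans hclose)
    _ = e_in + e_v := by ring
end
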